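/- Let σ : Ω → Ω be a measurable invertible map preserving a probability measure P, and for each ω let F_ω : Δ_ω → Δ_{σω} be measurable. Suppose μ_k^ω := (F^k_{σ^{-k}ω})_* ν_{σ^{-k}ω} for some initial family of probability measures ν_ω, where F^k_ω := F_{σ^{k-1}ω}∘⋯∘F_ω. If for almost every ω the Cesàro averages (1/n_m)∑_{k=0}^{n_m-1} μ_k^ω converge weak-* to μ_ω along a common sequence n_m, and each F_ω is continuous, then (F_ω)_* μ_ω = μ_{σω} for almost every ω. -/
import Mathlib

open MeasureTheory Filter Finset
open scoped Topology

/-- The random composition `F^k_ω = F_{σ^{k-1}ω} ∘ ⋯ ∘ F_ω`. -/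
def iterF {Ω Δ : Type*} (F : Ω → Δ → Δ) (σ : Ω → Ω) (ω : Ω) : ℕ → Δ → Δ
  | 0 => id
  | k + 1 => F (σ^[k] ω) ∘ iterF F σ ω k

lemma iterF_continuous {Ω Δ : Type*} [TopologicalSpace Δ] (F : Ω → Δ → Δ) (σ : Ω → Ω)
    (hF : ∀ ω, Continuous (F ω)) (ω : Ω) (k : ℕ) : Continuous (iterF F σ ω k) := by
  induction k with
  | zero => exact continuous_id
  | succ k ih => exact (hF _).comp ih

lemma abs_integral_le_integral_abs_aux {α : Type*} [MeasurableSpace α] {ρ : Measure α}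
    {f : α → ℝ} : |∫ x, f x ∂ρ| ≤ ∫ x, |f x| ∂ρ := by
  simpa using norm_integral_le_integral_norm (μ := ρ) f

theorem equivariance_of_cesaro_limits
    {Ω : Type*} [MeasurableSpace Ω] (P : Measure Ω) [IsProbabilityMeasure P]
    (σ σinv : Ω → Ω) (hσmeas : Measurable σ)
    (hinv₁ : Function.LeftInverse σinv σ) (hinv₂ : Function.RightInverse σinv σ)
    (hσ : MeasurePreserving σ P P)
    {Δ : Type*} [MetricSpace Δ] [CompactSpace Δ] [MeasurableSpace Δ] [BorelSpace Δ]
    (F : Ω → Δ → Δ) (hFcont : ∀ ω, Continuous (F ω))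
    (ν : Ω → Measure Δ) [∀ ω, IsProbabilityMeasure (ν ω)]
    (μk : Ω → ℕ → Measure Δ)
    (hμk : ∀ ω k, μk ω k = Measure.map (iterF F σ (σinv^[k] ω) k) (ν (σinv^[k] ω)))
    (n : ℕ → ℕ) (hn : StrictMono n)
    (μ : Ω → Measure Δ) [∀ ω, IsProbabilityMeasure (μ ω)]
    (hlim : ∀ᵐ ω ∂P, ∀ f : C(Δ, ℝ), Tendsto
      (fun m => (1 / ((n m) : ℝ)) * ∑ k ∈ range (n m), ∫ x, f x ∂(μk ω k))
      atTop (𝓝 (∫ x, f x ∂(μ ω)))) :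
    ∀ᵐ ω ∂P, Measure.map (F ω) (μ ω) = μ (σ ω) := by
  have hlimσ : ∀ᵐ ω ∂P, ∀ f : C(Δ, ℝ), Tendsto
      (fun m => (1 / ((n m) : ℝ)) * ∑ k ∈ range (n m), ∫ x, f x ∂(μk (σ ω) k))
      atTop (𝓝 (∫ x, f x ∂(μ (σ ω)))) :=
    hσ.quasiMeasurePreserving.ae hlim
  filter_upwards [hlim, hlimσ] with ω h1 h2
  -- probability measures on μk
  have hprob : ∀ ω' k, IsProbabilityMeasure (μk ω' k) := fun ω' k => by
    rw [hμk]
    exact Measure.isProbabilityMeasure_map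
      ((iterF_continuous F σ hFcont _ k).measurable.aemeasurable)
  -- key identity: map (F ω) (μk ω k) = μk (σ ω) (k+1)
  have hmap : ∀ k, Measure.map (F ω) (μk ω k) = μk (σ ω) (k + 1) := by
    intro k
    have hη : σinv^[k + 1] (σ ω) = σinv^[k] ω := by
      rw [Function.iterate_succ_apply, hinv₁]
    rw [hμk (σ ω) (k + 1), hη, hμk ω k]
    have hσk : σ^[k] (σinv^[k] ω) = ω := (Function.LeftInverse.iterate hinv₂ k) ω
    show _ = Measure.map (F (σ^[k] (σinv^[k] ω)) ∘ iterF F σ (σinv^[k] ω) k) _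
    rw [hσk, ← Measure.map_map (hFcont ω).measurable
      (iterF_continuous F σ hFcont _ k).measurable]
  -- equality of integrals of continuous functions
  have key : ∀ f : C(Δ, ℝ), ∫ x, f x ∂(Measure.map (F ω) (μ ω)) = ∫ x, f x ∂(μ (σ ω)) := by
    intro f
    set a : ℕ → ℝ := fun k => ∫ x, f x ∂(μk (σ ω) k) with ha
    -- limit from h1 with f ∘ F ω
    have hcomp : Tendsto (fun m => (1 / ((n m) : ℝ)) * ∑ k ∈ range (n m), a (k + 1))
        atTop (𝓝 (∫ x, f x ∂(Measure.map (F ω) (μ ω)))) := by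
      have hint : ∫ x, f x ∂(Measure.map (F ω) (μ ω)) = ∫ x, f (F ω x) ∂(μ ω) :=
        integral_map (hFcont ω).measurable.aemeasurable
          f.continuous.aestronglyMeasurable
      have heq : ∀ k, ∫ x, f (F ω x) ∂(μk ω k) = a (k + 1) := by
        intro k
        rw [ha]
        simp only [← hmap k]
        rw [integral_map (hFcont ω).measurable.aemeasurable
          f.continuous.aestronglyMeasurable]
      have := h1 (f.comp ⟨F ω, hFcont ω⟩)
      simp only [ContinuousMap.comp_apply, ContinuousMap.coe_mk] at this
      rw [hint]
      refine this.congr fun m => ?_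
      exact congrArg _ (Finset.sum_congr rfl fun k _ => heq k)
    -- limit from h2 with f
    have hbase : Tendsto (fun m => (1 / ((n m) : ℝ)) * ∑ k ∈ range (n m), a k)
        atTop (𝓝 (∫ x, f x ∂(μ (σ ω)))) := h2 f
    -- bound on a
    have habd : ∀ k, |a k| ≤ ‖f‖ := by
      intro k
      have := hprob (σ ω) k
      calc |a k| ≤ ∫ x, ‖f x‖ ∂(μk (σ ω) k) := by
            rw [ha]; exact abs_integral_le_integral_abs_aux
        _ ≤ ∫ _x, ‖f‖ ∂(μk (σ ω) k) := by
            refine integral_mono_of_nonneg (Eventually.of_forall fun x => norm_nonneg _)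
              (integrable_const _) (Eventually.of_forall fun x => f.norm_coe_le_norm x)
        _ = ‖f‖ := by simp
    -- error term tends to 0
    have herr : Tendsto (fun m => (1 / ((n m) : ℝ)) * (a (n m) - a 0)) atTop (𝓝 0) := by
      have h0 : Tendsto (fun m => (1 / ((n m) : ℝ)) * (2 * ‖f‖)) atTop (𝓝 0) := by
        have : Tendsto (fun m => (1 / ((n m) : ℝ))) atTop (𝓝 0) :=
          tendsto_one_div_atTop_nhds_zero_nat.comp hn.tendsto_atTop
        simpa using this.mul_const (2 * ‖f‖)
      refine squeeze_zero_norm (fun m => ?_) h0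
      rw [norm_mul, Real.norm_eq_abs, Real.norm_eq_abs]
      have h1n : |1 / ((n m : ℕ) : ℝ)| = 1 / ((n m : ℕ) : ℝ) := abs_of_nonneg (by positivity)
      rw [h1n]
      refine mul_le_mul_of_nonneg_left ?_ (by positivity)
      calc |a (n m) - a 0| ≤ |a (n m)| + |a 0| := abs_sub _ _
        _ ≤ ‖f‖ + ‖f‖ := add_le_add (habd _) (habd _)
        _ = 2 * ‖f‖ := by ring
    -- telescoping
    have hshift : ∀ m, (1 / ((n m) : ℝ)) * ∑ k ∈ range (n m), a (k + 1)
        = (1 / ((n m) : ℝ)) * ∑ k ∈ range (n m), a k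
          + (1 / ((n m) : ℝ)) * (a (n m) - a 0) := by
      intro m
      have : ∑ k ∈ range (n m), a (k + 1) = ∑ k ∈ range (n m), a k + (a (n m) - a 0) := by
        have := Finset.sum_range_sub a (n m)
        rw [Finset.sum_sub_distrib] at this
        linarith
      rw [this, mul_add]
    have : Tendsto (fun m => (1 / ((n m) : ℝ)) * ∑ k ∈ range (n m), a (k + 1))
        atTop (𝓝 (∫ x, f x ∂(μ (σ ω)) + 0)) := by
      simp only [hshift]
      exact hbase.add herr
    rw [add_zero] at this
    exact tendsto_nhds_unique hcomp this
  -- conclude measure equality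
  have : IsProbabilityMeasure (Measure.map (F ω) (μ ω)) :=
    Measure.isProbabilityMeasure_map (hFcont ω).measurable.aemeasurable
  refine ext_of_forall_lintegral_eq_of_IsFiniteMeasure fun g => ?_
  have gc : C(Δ, ℝ) := ⟨fun x => (g x : ℝ), NNReal.continuous_coe.comp g.continuous⟩
  have hkey := key ⟨fun x => (g x : ℝ), NNReal.continuous_coe.comp g.continuous⟩
  simp only [ContinuousMap.coe_mk] at hkey
  rw [lintegral_coe_eq_integral g (g.integrable_of_nnreal _),
    lintegral_coe_eq_integral g (g.integrable_of_nnreal _), hkey]
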